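/- Let G be a finite group with property (P). Then Ω₁(G) is a normal elementary abelian 2-subgroup of G, and for every Sylow 2-subgroup P of G one has Ω₁(G) = Ω₁(P) and the chain of containments P′ ≤ Φ(P) ≤ Ω₁(P) ≤ Z(P), where P′ is the commutator subgroup and Φ(P) the Frattini subgroup of P; in particular P is nilpotent of class at most 2. -/

import Mathlib

/-- A finite group `G` has property (P) if it has even order and for all `x y : G`
with `x` of order 2, the subgroup generated by `x` and `y` is isomorphic to one of
`ℤ/2`, `ℤ/2 × ℤ/2`, `ℤ/4`, `ℤ/6`, `ℤ/2 × ℤ/4`, `ℤ/2 × ℤ/6` or `A₄`. -/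
def PropertyP (G : Type*) [Group G] : Prop :=
  Even (Nat.card G) ∧
  ∀ x y : G, orderOf x = 2 →
    Nonempty (↥(Subgroup.closure {x, y}) ≃* Multiplicative (ZMod 2)) ∨
    Nonempty (↥(Subgroup.closure {x, y}) ≃*
      Multiplicative (ZMod 2) × Multiplicative (ZMod 2)) ∨
    Nonempty (↥(Subgroup.closure {x, y}) ≃* Multiplicative (ZMod 4)) ∨
    Nonempty (↥(Subgroup.closure {x, y}) ≃* Multiplicative (ZMod 6)) ∨
    Nonempty (↥(Subgroup.closure {x, y}) ≃*
      Multiplicative (ZMod 2) × Multiplicative (ZMod 4)) ∨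
    Nonempty (↥(Subgroup.closure {x, y}) ≃*
      Multiplicative (ZMod 2) × Multiplicative (ZMod 6)) ∨
    Nonempty (↥(Subgroup.closure {x, y}) ≃* alternatingGroup (Fin 4))

/-- `Ω₁(H)`: the subgroup generated by all elements of order 2. -/
def omegaOne (G : Type*) [Group G] : Subgroup G :=
  Subgroup.closure {x : G | orderOf x = 2}

open Subgroup Pointwise

private lemma a4comm' : ∀ a b : Equiv.Perm (Fin 4), Equiv.Perm.sign a = 1 → Equiv.Perm.sign b = 1 →
    a^2 = 1 → b^2 = 1 → a*b = b*a := by decide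

private lemma a4_sq_comm (a b : alternatingGroup (Fin 4)) (ha : a^2 = 1) (hb : b^2 = 1) :
    a * b = b * a := by
  have ha' : (a : Equiv.Perm (Fin 4))^2 = 1 := by
    have := congrArg Subtype.val ha; push_cast at this; exact_mod_cast this
  have hb' : (b : Equiv.Perm (Fin 4))^2 = 1 := by
    have := congrArg Subtype.val hb; push_cast at this; exact_mod_cast this
  exact Subtype.ext (a4comm' a.1 b.1 a.2 b.2 ha' hb')

private lemma not_pgroup2 (K : Type*) [Group K] [Finite K] (h3 : 3 ∣ Nat.card K)
    (h : IsPGroup 2 K) : False := by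
  obtain ⟨n, hn⟩ := (IsPGroup.iff_card (p := 2)).mp h
  rw [hn] at h3
  have := Nat.Prime.dvd_of_dvd_pow (by norm_num : Nat.Prime 3) h3
  omega

private lemma card6 : 3 ∣ Nat.card (Multiplicative (ZMod 6)) := by
  simp [Nat.card_eq_fintype_card]
private lemma card26 : 3 ∣ Nat.card (Multiplicative (ZMod 2) × Multiplicative (ZMod 6)) := by
  simp [Nat.card_eq_fintype_card]
private lemma cardA4 : 3 ∣ Nat.card (alternatingGroup (Fin 4)) := by
  rw [Nat.card_eq_fintype_card, show Fintype.card (alternatingGroup (Fin 4)) = 12 from by decide]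
  norm_num

private lemma comm_of_subgroup {G : Type*} [Group G] {H : Subgroup G} {x y : G}
    (hx : x ∈ H) (hy : y ∈ H)
    (h : (⟨x, hx⟩ : H) * ⟨y, hy⟩ = ⟨y, hy⟩ * ⟨x, hx⟩) : x * y = y * x := by
  simpa [Subtype.ext_iff] using h

private lemma invol_comm {G : Type*} [Group G] (hP : PropertyP G) {x y : G}
    (hx : orderOf x = 2) (hy : orderOf y = 2) : x * y = y * x := by
  have hxc : x ∈ Subgroup.closure {x, y} := Subgroup.subset_closure (by simp)
  have hyc : y ∈ Subgroup.closure {x, y} := Subgroup.subset_closure (by simp)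
  apply comm_of_subgroup hxc hyc
  have hX2 : (⟨x, hxc⟩ : Subgroup.closure {x, y})^2 = 1 := by
    ext; push_cast; rw [← hx]; exact pow_orderOf_eq_one x
  have hY2 : (⟨y, hyc⟩ : Subgroup.closure {x, y})^2 = 1 := by
    ext; push_cast; rw [← hy]; exact pow_orderOf_eq_one y
  rcases hP.2 x y hx with h|h|h|h|h|h|h <;> obtain ⟨e⟩ := h
  · exact e.injective (by rw [map_mul, map_mul, mul_comm])
  · exact e.injective (by rw [map_mul, map_mul, mul_comm])
  · exact e.injective (by rw [map_mul, map_mul, mul_comm])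
  · exact e.injective (by rw [map_mul, map_mul, mul_comm])
  · exact e.injective (by rw [map_mul, map_mul, mul_comm])
  · exact e.injective (by rw [map_mul, map_mul, mul_comm])
  · exact e.injective (by
      rw [map_mul, map_mul]
      exact a4_sq_comm _ _ (by rw [← map_pow, hX2, map_one]) (by rw [← map_pow, hY2, map_one]))

private lemma key_lemma {G : Type*} [Group G] [Finite G] (hP : PropertyP G) {x y : G}
    (hx : orderOf x = 2) (h2 : IsPGroup 2 (Subgroup.closure {x, y})) :
    x * y = y * x ∧ ∀ g ∈ Subgroup.closure {x, y}, g ^ 4 = 1 := by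
  have hxc : x ∈ Subgroup.closure {x, y} := Subgroup.subset_closure (by simp)
  have hyc : y ∈ Subgroup.closure {x, y} := Subgroup.subset_closure (by simp)
  have main : (∀ a b : Subgroup.closure {x, y}, a*b = b*a) ∧
      (∀ a : Subgroup.closure {x, y}, a^4 = 1) := by
    rcases hP.2 x y hx with h|h|h|h|h|h|h <;> obtain ⟨e⟩ := h
    · exact ⟨fun a b => e.injective (by rw [map_mul, map_mul, mul_comm]),
        fun a => e.injective (by
          rw [map_pow, map_one]
          exact (by decide : ∀ g : Multiplicative (ZMod 2), g^4 = 1) _)⟩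
    · exact ⟨fun a b => e.injective (by rw [map_mul, map_mul, mul_comm]),
        fun a => e.injective (by
          rw [map_pow, map_one]
          exact (by decide : ∀ g : Multiplicative (ZMod 2) × Multiplicative (ZMod 2), g^4 = 1) _)⟩
    · exact ⟨fun a b => e.injective (by rw [map_mul, map_mul, mul_comm]),
        fun a => e.injective (by
          rw [map_pow, map_one]
          exact (by decide : ∀ g : Multiplicative (ZMod 4), g^4 = 1) _)⟩
    · exact absurd (h2.of_equiv e) (fun h => not_pgroup2 _ card6 h)
    · exact ⟨fun a b => e.injective (by rw [map_mul, map_mul, mul_comm]),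
        fun a => e.injective (by
          rw [map_pow, map_one]
          exact (by decide : ∀ g : Multiplicative (ZMod 2) × Multiplicative (ZMod 4), g^4 = 1) _)⟩
    · exact absurd (h2.of_equiv e) (fun h => not_pgroup2 _ card26 h)
    · exact absurd (h2.of_equiv e) (fun h => not_pgroup2 _ cardA4 h)
  refine ⟨comm_of_subgroup hxc hyc (main.1 _ _), fun g hg => ?_⟩
  have := main.2 ⟨g, hg⟩
  simpa [Subtype.ext_iff] using this

private lemma omegaOne_mem_iff {G : Type*} [Group G] [Finite G] (hP : PropertyP G) (g : G) :
    g ∈ omegaOne G ↔ orderOf g = 2 ∨ g = 1 := by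
  haveI : Fact (Nat.Prime 2) := ⟨Nat.prime_two⟩
  let K : Subgroup G :=
  { carrier := {x : G | orderOf x = 2} ∪ {1}
    one_mem' := Or.inr rfl
    inv_mem' := by
      intro a ha
      rcases ha with ha | ha
      · exact Or.inl (show orderOf a⁻¹ = 2 by rw [orderOf_inv]; exact ha)
      · simp only [Set.mem_singleton_iff] at ha; subst ha; exact Or.inr (by simp)
    mul_mem' := by
      intro a b ha hb
      rcases ha with ha | ha
      · rcases hb with hb | hb
        · have ha : orderOf a = 2 := ha
          have hb : orderOf b = 2 := hb
          have hc := invol_comm hP ha hb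
          have ha1 : a * a = 1 := by
            have := pow_orderOf_eq_one a; rw [ha, sq] at this; exact this
          have hb1 : b * b = 1 := by
            have := pow_orderOf_eq_one b; rw [hb, sq] at this; exact this
          have hsq : (a * b) ^ 2 = 1 := by
            calc (a*b)^2 = a*(b*a)*b := by rw [sq]; group
            _ = a*(a*b)*b := by rw [hc]
            _ = (a*a)*(b*b) := by group
            _ = 1 := by rw [ha1, hb1, one_mul]
          by_cases hab : a * b = 1
          · exact Or.inr hab
          · exact Or.inl (orderOf_eq_prime hsq hab)
        · simp only [Set.mem_singleton_iff] at hb; subst hb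
          exact Or.inl (by simpa using ha)
      · simp only [Set.mem_singleton_iff] at ha; subst ha
        rcases hb with hb | hb
        · exact Or.inl (by simpa using hb)
        · simp only [Set.mem_singleton_iff] at hb; subst hb; exact Or.inr (by simp) }
  have hK : omegaOne G = K := by
    apply le_antisymm
    · exact (Subgroup.closure_le _).mpr (fun z hz => Or.inl hz)
    · intro z hz
      rcases hz with hz | hz
      · exact Subgroup.subset_closure hz
      · simp only [Set.mem_singleton_iff] at hz; subst hz; exact one_mem _
  rw [hK]
  show g ∈ ({x : G | orderOf x = 2} ∪ {1} : Set G) ↔ _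
  simp [Set.mem_union, or_comm]

private lemma omegaOne_normal' {G : Type*} [Group G] [Finite G] (hP : PropertyP G) :
    (omegaOne G).Normal := by
  constructor
  intro n hn g
  rw [omegaOne_mem_iff hP] at hn ⊢
  rcases hn with hn | rfl
  · left
    have := orderOf_injective (MulAut.conj g).toMonoidHom (MulAut.conj g).injective n
    simpa [MulAut.conj_apply, hn] using this
  · right; simp

section Central
variable {H : Type*} [Group H]

private lemma comm_central_left (m z b : H) (hz : ∀ g : H, g * z = z * g) :
    (m*z)*b*(m*z)⁻¹*b⁻¹ = m*b*m⁻¹*b⁻¹ := by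
  calc (m*z)*b*(m*z)⁻¹*b⁻¹ = m*(z*b*z⁻¹)*m⁻¹*b⁻¹ := by group
  _ = m*b*m⁻¹*b⁻¹ := by rw [← hz b, mul_inv_cancel_right]

private lemma comm_central_right (a m' z' : H) (hz' : ∀ g : H, g * z' = z' * g) :
    a*(m'*z')*a⁻¹*(m'*z')⁻¹ = a*m'*a⁻¹*m'⁻¹ := by
  calc a*(m'*z')*a⁻¹*(m'*z')⁻¹ = a*m'*(z'*a⁻¹*z'⁻¹)*m'⁻¹ := by group
  _ = a*m'*a⁻¹*m'⁻¹ := by rw [← hz' a⁻¹, mul_inv_cancel_right]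

private lemma commutator_le_of_sq (N : Subgroup H) (hc : N ≤ Subgroup.center H)
    (hsq : ∀ c : H, c ^ 2 ∈ N) : commutator H ≤ N := by
  rw [commutator_def, Subgroup.commutator_le]
  intro a _ b _
  have hmove : (a*b) * (a^2)⁻¹ = (a^2)⁻¹ * (a*b) :=
    Subgroup.mem_center_iff.mp ((Subgroup.center H).inv_mem (hc (hsq a))) (a*b)
  have key : (a*b)^2 * (a^2)⁻¹ * (b^2)⁻¹ = a*b*a⁻¹*b⁻¹ := by
    calc (a*b)^2*(a^2)⁻¹*(b^2)⁻¹ = (a*b)*((a*b)*(a^2)⁻¹)*(b^2)⁻¹ := by rw [sq]; group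
    _ = (a*b)*((a^2)⁻¹*(a*b))*(b^2)⁻¹ := by rw [hmove]
    _ = a*b*a⁻¹*b⁻¹ := by group
  show a*b*a⁻¹*b⁻¹ ∈ N
  rw [← key]
  exact mul_mem (mul_mem (hsq _) (N.inv_mem (hsq a))) (N.inv_mem (hsq b))

private lemma frattini_le_of_sq [Finite H] (N : Subgroup H) (hcomm : commutator H ≤ N)
    (hsq : ∀ c : H, c ^ 2 ∈ N) : frattini H ≤ N := by
  intro g hg
  by_contra hgN
  obtain ⟨M, hMS, hmax⟩ := Set.Finite.exists_maximalFor id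
    {M : Subgroup H | N ≤ M ∧ g ∉ M} (Set.toFinite _) ⟨N, le_refl _, hgN⟩
  obtain ⟨hNM, hgM⟩ := hMS
  haveI hMnormal : M.Normal := by
    constructor
    intro n hn p
    have h1 : p*n*p⁻¹*n⁻¹ ∈ M :=
      hNM (hcomm (Subgroup.commutator_mem_commutator (Subgroup.mem_top p) (Subgroup.mem_top n)))
    have h2 : (p*n*p⁻¹*n⁻¹)*n = p*n*p⁻¹ := by group
    rw [← h2]; exact mul_mem h1 hn
  have hM : IsCoatom M := by
    constructor
    · intro htop; rw [htop] at hgM; exact hgM trivial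
    · intro K hMK
      by_contra hKtop
      have hNK : N ≤ K := hNM.trans hMK.le
      have hgK : g ∈ K := by
        by_contra hgK
        exact hMK.ne (le_antisymm hMK.le (hmax ⟨hNK, hgK⟩ hMK.le))
      obtain ⟨h, hhK⟩ : ∃ h : H, h ∉ K := by
        by_contra hall; push_neg at hall
        exact hKtop ((Subgroup.eq_top_iff' K).mpr hall)
      have hgL : g ∈ M ⊔ Subgroup.zpowers h := by
        by_contra hgL
        have heq := le_antisymm le_sup_left (hmax (j := M ⊔ Subgroup.zpowers h) ⟨hNM.trans le_sup_left, hgL⟩ le_sup_left)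
        have hhM : h ∈ M := by
          have : M = M ⊔ Subgroup.zpowers h := heq
          rw [this]
          exact Subgroup.mem_sup_right (Subgroup.mem_zpowers h)
        exact hhK (hMK.le hhM)
      have hgmem : g ∈ (M : Set H) * (Subgroup.zpowers h : Set H) := by
        rw [← Subgroup.normal_mul]; exact hgL
      obtain ⟨m, hm, t, ht, hmt⟩ := hgmem
      obtain ⟨k, hk⟩ := ht
      have hh2 : h^(2:ℕ) ∈ M := hNM (hsq h)
      rcases Int.even_or_odd k with ⟨j, hj⟩ | ⟨j, hj⟩
      · apply hgM
        rw [← hmt, ← hk, hj]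
        have hpow : h ^ (j + j) = (h^(2:ℕ))^j := by
          rw [← zpow_natCast h 2, ← zpow_mul]
          congr 1; ring
        exact mul_mem hm (by beta_reduce; rw [hpow]; exact Subgroup.zpow_mem M hh2 j)
      · apply hhK
        have h1 : (h^(2:ℕ))^j ∈ K := hMK.le (Subgroup.zpow_mem M hh2 j)
        have hh : h = (m * (h^(2:ℕ))^j)⁻¹ * g := by
          rw [← hmt, ← hk, hj]
          beta_reduce
          rw [← zpow_natCast h 2, ← zpow_mul]
          group
        rw [hh]
        exact mul_mem (K.inv_mem (mul_mem (hMK.le hm) h1)) hgK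
  exact hgM (frattini_le_coatom hM hg)

end Central

private lemma commutator_le_frattini_of_central {H : Type*} [Group H]
    (hZ : commutator H ≤ Subgroup.center H) : commutator H ≤ frattini H := by
  rw [frattini, Order.radical]
  refine le_iInf fun M => le_iInf fun hM => ?_
  by_cases hZM : Subgroup.center H ≤ M
  · exact hZ.trans hZM
  · have hsup : M ⊔ Subgroup.center H = ⊤ := by
      apply hM.2
      exact lt_of_le_of_ne le_sup_left
        (fun he => hZM (by rw [he]; exact le_sup_right))
    rw [commutator_def, Subgroup.commutator_le]
    intro a _ b _
    have ha : a ∈ (M : Set H) * (Subgroup.center H : Set H) := by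
      rw [← Subgroup.mul_normal, hsup]; exact Set.mem_univ a
    have hb : b ∈ (M : Set H) * (Subgroup.center H : Set H) := by
      rw [← Subgroup.mul_normal, hsup]; exact Set.mem_univ b
    obtain ⟨m, hm, z, hz, rfl⟩ := ha
    obtain ⟨m', hm', z', hz', rfl⟩ := hb
    have hzz : ∀ g : H, g * z = z * g := Subgroup.mem_center_iff.mp hz
    have hzz' : ∀ g : H, g * z' = z' * g := Subgroup.mem_center_iff.mp hz'
    show (m*z)*(m'*z')*(m*z)⁻¹*(m'*z')⁻¹ ∈ M
    rw [comm_central_right _ _ _ hzz', comm_central_left _ _ _ hzz]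
    exact mul_mem (mul_mem (mul_mem hm hm') (M.inv_mem hm)) (M.inv_mem hm')

private lemma ucs_two_eq_top {H : Type*} [Group H]
    (hZ : commutator H ≤ Subgroup.center H) : _root_.upperCentralSeries H 2 = ⊤ := by
  rw [eq_top_iff']
  intro x
  have hx : x ∈ Subgroup.upperCentralSeries H (1 + 1) := by
    rw [Subgroup.mem_upperCentralSeries_succ_iff]
    intro y
    rw [Subgroup.upperCentralSeries_one]
    exact hZ (Subgroup.commutator_mem_commutator (Subgroup.mem_top x) (Subgroup.mem_top y))
  exact hx

/-- if `G` has property (P), then `Ω₁(G)` is a normal elementary abelian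
2-subgroup, and for every Sylow 2-subgroup `P` one has `Ω₁(G) = Ω₁(P)` and
`P' ≤ Φ(P) ≤ Ω₁(P) ≤ Z(P)`; in particular `P` is nilpotent of class at most 2. -/
theorem stmt4 (G : Type*) [Group G] [Finite G] (hP : PropertyP G) :
    (omegaOne G).Normal ∧
    (∀ x ∈ omegaOne G, x ^ 2 = 1) ∧
    (∀ x ∈ omegaOne G, ∀ y ∈ omegaOne G, x * y = y * x) ∧
    (∀ P : Sylow 2 G,
      omegaOne G = (omegaOne ↥(P : Subgroup G)).map (P : Subgroup G).subtype ∧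
      commutator ↥(P : Subgroup G) ≤ frattini ↥(P : Subgroup G) ∧
      frattini ↥(P : Subgroup G) ≤ omegaOne ↥(P : Subgroup G) ∧
      omegaOne ↥(P : Subgroup G) ≤ Subgroup.center ↥(P : Subgroup G) ∧
      _root_.upperCentralSeries ↥(P : Subgroup G) 2 = ⊤) := by
  haveI : Fact (Nat.Prime 2) := ⟨Nat.prime_two⟩
  have hmem := omegaOne_mem_iff hP
  have hnormal := omegaOne_normal' hP
  have hsqG : ∀ x ∈ omegaOne G, x ^ 2 = 1 := by
    intro x hx
    rcases (hmem x).mp hx with h | rfl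
    · rw [← h]; exact pow_orderOf_eq_one x
    · simp
  refine ⟨hnormal, hsqG, ?_, ?_⟩
  · intro x hx y hy
    rcases (hmem x).mp hx with h1 | rfl
    · rcases (hmem y).mp hy with h2 | rfl
      · exact invol_comm hP h1 h2
      · simp
    · simp
  intro P
  have hO2 : IsPGroup 2 (omegaOne G) := by
    intro g
    refine ⟨1, Subtype.ext ?_⟩
    have h := hsqG (g : G) g.2
    push_cast
    simpa using h
  have hle : (omegaOne G) ≤ P := by
    obtain ⟨Q, hQ⟩ := hO2.exists_le_sylow
    obtain ⟨g, hg⟩ := MulAction.exists_smul_eq G Q P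
    rw [← hg]
    intro x hx
    have h1 : g⁻¹ * x * g ∈ omegaOne G := by
      have := hnormal.conj_mem x hx g⁻¹
      simpa using this
    have h2 : g⁻¹ * x * g ∈ Q := hQ h1
    rw [Sylow.coe_subgroup_smul, Subgroup.mem_pointwise_smul_iff_inv_smul_mem]
    have h2' : g⁻¹ * (x * g) ∈ Q := by simpa [mul_assoc] using h2
    simp [MulAut.smul_def, mul_assoc]
    exact h2'
  have hmap : omegaOne G = (omegaOne ↥(P : Subgroup G)).map (P : Subgroup G).subtype := by
    have him : ((P : Subgroup G).subtype '' {a : ↥(P : Subgroup G) | orderOf a = 2}) =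
        {x : G | orderOf x = 2} := by
      ext z
      constructor
      · rintro ⟨a, ha, rfl⟩
        have : orderOf a = 2 := ha
        show orderOf ((P : Subgroup G).subtype a) = 2
        rw [Subgroup.coe_subtype, Subgroup.orderOf_coe]
        exact this
      · intro hz
        refine ⟨⟨z, hle (Subgroup.subset_closure hz)⟩, ?_, rfl⟩
        show orderOf (⟨z, _⟩ : ↥(P : Subgroup G)) = 2
        rw [Subgroup.orderOf_mk]; exact hz
    rw [omegaOne, omegaOne, MonoidHom.map_closure, him]
  have hcl2 : ∀ x y : ↥(P : Subgroup G), IsPGroup 2 (Subgroup.closure {(x:G), (y:G)}) := by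
    intro x y
    apply P.2.to_le
    apply (Subgroup.closure_le _).mpr
    intro z hz
    simp only [Set.mem_insert_iff, Set.mem_singleton_iff] at hz
    rcases hz with rfl | rfl
    exacts [x.2, y.2]
  have hpow4 : ∀ c : ↥(P : Subgroup G), (c : G) ^ 4 = 1 := by
    intro c
    obtain ⟨k, hk⟩ := IsPGroup.iff_orderOf.mp P.2 c
    by_cases hdvd : orderOf c ∣ 4
    · have h4 : c ^ 4 = 1 := orderOf_dvd_iff_pow_eq_one.mp hdvd
      have := congrArg Subtype.val h4
      push_cast at this
      exact this
    · have hk3 : 3 ≤ k := by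
        by_contra hlt; push_neg at hlt
        interval_cases k <;> simp_all
      set x : ↥(P : Subgroup G) := c ^ (2^(k-1)) with hxdef
      have hx2 : x ^ 2 = 1 := by
        rw [hxdef, ← pow_mul]
        have h22 : 2^(k-1) * 2 = 2^k := by
          rw [mul_comm, ← pow_succ']
          congr 1; omega
        rw [h22, ← hk]
        exact pow_orderOf_eq_one c
      have hxne : x ≠ 1 := by
        intro h1
        have hdvd' : orderOf c ∣ 2^(k-1) := orderOf_dvd_of_pow_eq_one h1
        rw [hk] at hdvd'
        have := (Nat.pow_dvd_pow_iff_le_right (by norm_num : 1 < 2)).mp hdvd'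
        omega
      have hxo : orderOf x = 2 := orderOf_eq_prime hx2 hxne
      have hxo' : orderOf (x : G) = 2 := by rw [Subgroup.orderOf_coe]; exact hxo
      have hcc : (c : G) ∈ Subgroup.closure {(x:G), (c:G)} :=
        Subgroup.subset_closure (by simp)
      exact (key_lemma hP hxo' (hcl2 x c)).2 _ hcc
  have hsqP : ∀ c : ↥(P : Subgroup G), c ^ 2 ∈ omegaOne ↥(P : Subgroup G) := by
    intro c
    by_cases h1 : c ^ 2 = 1
    · rw [h1]; exact one_mem _
    · apply Subgroup.subset_closure
      show orderOf (c ^ 2) = 2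
      apply orderOf_eq_prime _ h1
      rw [← pow_mul]
      exact Subtype.ext (by push_cast; exact hpow4 c)
  have hcenter : omegaOne ↥(P : Subgroup G) ≤ Subgroup.center ↥(P : Subgroup G) := by
    apply (Subgroup.closure_le _).mpr
    intro a ha
    have ha2 : orderOf a = 2 := ha
    rw [SetLike.mem_coe, Subgroup.mem_center_iff]
    intro b
    have hao : orderOf (a : G) = 2 := by rw [Subgroup.orderOf_coe]; exact ha2
    have hc := (key_lemma hP hao (hcl2 a b)).1
    exact Subtype.ext (by push_cast; exact hc.symm)
  have hcommP : commutator ↥(P : Subgroup G) ≤ omegaOne ↥(P : Subgroup G) :=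
    commutator_le_of_sq _ hcenter hsqP
  have hcommZ : commutator ↥(P : Subgroup G) ≤ Subgroup.center ↥(P : Subgroup G) :=
    hcommP.trans hcenter
  exact ⟨hmap, commutator_le_frattini_of_central hcommZ,
    frattini_le_of_sq _ hcommP hsqP, hcenter, ucs_two_eq_top hcommZ⟩
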